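/- arXiv:2602.21679 — 3 statements merged into one kernel-verified Lean document; each statement's English description precedes it below -/
import Mathlib

section
/- Let (X, ν) be a probability space, let a ≥ 1 be an integer, and let f_1, …, f_n : X → ℂ be bounded measurable functions that can be partitioned into at most a groups such that within each group the functions are ν-independent and each f_i is equidistributed with a fixed function f. Then |∫ Π_{i=1}^n f_i dν| ≤ (∫ |f|^a dν)^{n/a}. -/
open MeasureTheory ProbabilityTheory
open scoped ENNReal

set_option maxHeartbeats 1000000

open MeasureTheory ProbabilityTheory
open scoped ENNReal

lemma lintegral_finset_prod_of_iIndep' {Ω ι : Type*} [MeasurableSpace Ω] {μ : Measure Ω}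
    [IsProbabilityMeasure μ] {h : ι → Ω → ℝ≥0∞} (hm : ∀ i, Measurable (h i))
    (hind : iIndepFun h μ) (s : Finset ι) :
    ∫⁻ x, ∏ i ∈ s, h i x ∂μ = ∏ i ∈ s, ∫⁻ x, h i x ∂μ := by
  classical
  induction s using Finset.induction_on with
  | empty => simp
  | @insert i s hnot ih =>
    simp only [Finset.prod_insert hnot]
    have hprodmeas : Measurable fun x => ∏ j ∈ s, h j x :=
      Finset.measurable_prod _ fun j _ => hm j
    have hIndep : IndepFun (h i) (fun x => ∏ j ∈ s, h j x) μ := by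
      have h2 := (hind.indepFun_finsetProd_of_notMem hm hnot).symm
      have : (∏ j ∈ s, h j) = fun x => ∏ j ∈ s, h j x := by
        funext x; simp [Finset.prod_apply]
      rwa [this] at h2
    have := lintegral_mul_eq_lintegral_mul_lintegral_of_indepFun (hm i) hprodmeas hIndep
    simp only [Pi.mul_apply] at this
    rw [this, ih]


/-- Hölder step.  If bounded measurable `f₁,…,f_n : X → ℂ` on a probability
space can be partitioned (via `g`) into at most `a` groups such that the functions in each
group are independent, and each `f_i` is equidistributed with a fixed `f₀`, then
`|∫ Π f_i dν| ≤ (∫ |f₀|^a dν)^{n/a}`. -/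
theorem stmt9 {X : Type*} [MeasurableSpace X] (ν : Measure X) [IsProbabilityMeasure ν]
    (a n : ℕ) (ha : 1 ≤ a)
    (f : Fin n → X → ℂ) (f0 : X → ℂ)
    (hmeas : ∀ i, Measurable (f i)) (hmeas0 : Measurable f0)
    (hbdd : ∃ C : ℝ, ∀ i x, ‖f i x‖ ≤ C)
    (g : Fin n → Fin a)
    (hindep : ∀ jgrp : Fin a,
      iIndepFun
        (fun i : {i : Fin n // g i = jgrp} => f i.1) ν)
    (hdist : ∀ i, Measure.map (f i) ν = Measure.map f0 ν) :
    ‖∫ x, ∏ i, f i x ∂ν‖ ≤ (∫ x, ‖f0 x‖ ^ (a : ℝ) ∂ν) ^ ((n : ℝ) / a) := by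
  classical
  rcases Nat.eq_zero_or_pos n with hn | hn
  · subst hn
    simp
  obtain ⟨C, hC⟩ := hbdd
  have haR : (0:ℝ) < a := by exact_mod_cast ha
  set φ : ℂ → ℝ≥0∞ := fun z => (‖z‖₊ : ℝ≥0∞) ^ a with hφdef
  have hφm : Measurable φ := (measurable_coe_nnreal_ennreal.comp measurable_nnnorm).pow_const a
  set A : ℝ≥0∞ := ∫⁻ x, φ (f0 x) ∂ν with hAdef
  have hAi : ∀ i : Fin n, ∫⁻ x, φ (f i x) ∂ν = A := by
    intro i
    rw [hAdef, ← lintegral_map hφm (hmeas i), hdist i, lintegral_map hφm hmeas0]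
  have hAtop : A ≠ ⊤ := by
    have i0 : Fin n := ⟨0, hn⟩
    rw [← hAi i0]
    have hb : ∀ x, φ (f i0 x) ≤ ENNReal.ofReal C ^ a := by
      intro x
      refine pow_le_pow_left' ?_ a
      rw [← enorm_eq_nnnorm, ← ofReal_norm]
      exact ENNReal.ofReal_le_ofReal (hC i0 x)
    have hle : ∫⁻ x, φ (f i0 x) ∂ν ≤ ENNReal.ofReal C ^ a := by
      calc ∫⁻ x, φ (f i0 x) ∂ν ≤ ∫⁻ _, ENNReal.ofReal C ^ a ∂ν := lintegral_mono hb
        _ = ENNReal.ofReal C ^ a := by simp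
    exact ne_top_of_le_ne_top (ENNReal.pow_ne_top ENNReal.ofReal_ne_top) hle
  set F : Fin n → X → ℝ≥0∞ := fun i x => (‖f i x‖₊ : ℝ≥0∞) with hFdef
  have hFm : ∀ i, Measurable (F i) := fun i =>
    measurable_coe_nnreal_ennreal.comp ((hmeas i).nnnorm)
  set H : Fin a → X → ℝ≥0∞ := fun j x => ∏ i ∈ Finset.univ.filter (fun i => g i = j), F i x
    with hHdef
  have hHm : ∀ j, Measurable (H j) := fun j =>
    Finset.measurable_prod _ fun i _ => hFm i
  -- Hölder
  have hold : ∫⁻ x, ∏ j, H j x ∂ν ≤ ∏ j, (∫⁻ x, H j x ^ a ∂ν) ^ ((1:ℝ)/a) := by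
    have h1 := ENNReal.lintegral_prod_norm_pow_le (μ := ν) Finset.univ
      (f := fun j x => H j x ^ a)
      (fun j _ => ((hHm j).pow_const a).aemeasurable)
      (p := fun _ : Fin a => (1:ℝ)/a)
      (by simp [Finset.card_univ, mul_one_div_cancel (ne_of_gt haR), mul_inv_cancel₀ (ne_of_gt haR)])
      (fun j _ => by positivity)
    have h2 : ∀ x : X, ∏ j, (H j x ^ a) ^ ((1:ℝ)/a) = ∏ j, H j x := by
      intro x
      refine Finset.prod_congr rfl fun j _ => ?_
      rw [← ENNReal.rpow_natCast (H j x) a, ← ENNReal.rpow_mul,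
        mul_one_div_cancel (ne_of_gt haR), ENNReal.rpow_one]
    calc ∫⁻ x, ∏ j, H j x ∂ν = ∫⁻ x, ∏ j, (H j x ^ a) ^ ((1:ℝ)/a) ∂ν := by
          refine lintegral_congr fun x => (h2 x).symm
      _ ≤ _ := h1
  -- each group integral via independence and equidistribution
  have hgrp : ∀ j : Fin a, ∫⁻ x, H j x ^ a ∂ν
      = ∏ _i ∈ Finset.univ.filter (fun i => g i = j), A := by
    intro j
    have hsub : ∀ (ψ : Fin n → ℝ≥0∞),
        ∏ i ∈ Finset.univ.filter (fun i => g i = j), ψ i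
          = ∏ i : {i : Fin n // g i = j}, ψ i.1 := fun ψ =>
      Finset.prod_subtype _ (by simp) ψ
    have hpt : ∀ x, H j x ^ a = ∏ i : {i : Fin n // g i = j}, φ (f i.1 x) := by
      intro x
      rw [hHdef]
      simp only [← Finset.prod_pow]
      exact hsub fun i => F i x ^ a
    have hindφ : iIndepFun
        (fun i : {i : Fin n // g i = j} => fun x => φ (f i.1 x)) ν :=
      (hindep j).comp (fun _ => φ) (fun _ => hφm)
    calc ∫⁻ x, H j x ^ a ∂ν
        = ∫⁻ x, ∏ i : {i : Fin n // g i = j}, φ (f i.1 x) ∂ν :=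
          lintegral_congr hpt
      _ = ∏ i : {i : Fin n // g i = j}, ∫⁻ x, φ (f i.1 x) ∂ν := by
          exact lintegral_finset_prod_of_iIndep'
            (fun i : {i : Fin n // g i = j} => hφm.comp (hmeas i.1)) hindφ Finset.univ
      _ = ∏ i : {i : Fin n // g i = j}, A := by
          exact Finset.prod_congr rfl fun i _ => hAi i.1
      _ = _ := (hsub fun _ => A).symm
  -- assemble the key ENNReal bound
  have key : ∫⁻ x, ∏ i, F i x ∂ν ≤ A ^ ((n:ℝ)/a) := by
    calc ∫⁻ x, ∏ i, F i x ∂ν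
        = ∫⁻ x, ∏ j, H j x ∂ν := by
          refine lintegral_congr fun x => ?_
          exact (Finset.prod_fiberwise Finset.univ g fun i => F i x).symm
      _ ≤ ∏ j, (∫⁻ x, H j x ^ a ∂ν) ^ ((1:ℝ)/a) := hold
      _ = ∏ j, ∏ _i ∈ Finset.univ.filter (fun i => g i = j), A ^ ((1:ℝ)/a) := by
          refine Finset.prod_congr rfl fun j _ => ?_
          rw [hgrp j, ENNReal.prod_rpow_of_nonneg (by positivity)]
      _ = ∏ _i : Fin n, A ^ ((1:ℝ)/a) :=
          Finset.prod_fiberwise Finset.univ g fun _ => A ^ ((1:ℝ)/a)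
      _ = (A ^ ((1:ℝ)/a)) ^ n := by simp [Finset.card_univ]
      _ = A ^ ((n:ℝ)/a) := by
          rw [← ENNReal.rpow_natCast (A ^ ((1:ℝ)/a)) n, ← ENNReal.rpow_mul]
          congr 1
          field_simp
  -- pass to real integrals
  have h2 : ∫ x, ∏ i, ‖f i x‖ ∂ν = (∫⁻ x, ∏ i, F i x ∂ν).toReal := by
    rw [integral_eq_lintegral_of_nonneg_ae]
    · congr 1
      refine lintegral_congr fun x => ?_
      rw [← norm_prod, ofReal_norm, enorm_eq_nnnorm, nnnorm_prod, ENNReal.coe_finset_prod]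
    · exact Filter.Eventually.of_forall fun x =>
        Finset.prod_nonneg fun i _ => norm_nonneg _
    · exact (Finset.measurable_prod _ fun i _ => (hmeas i).norm).aestronglyMeasurable
  have h3 : ∫ x, ‖f0 x‖ ^ (a:ℝ) ∂ν = A.toReal := by
    rw [integral_eq_lintegral_of_nonneg_ae]
    · congr 1
      refine lintegral_congr fun x => ?_
      rw [← ENNReal.ofReal_rpow_of_nonneg (norm_nonneg _) (le_of_lt haR),
        ofReal_norm, enorm_eq_nnnorm, ENNReal.rpow_natCast]
    · exact Filter.Eventually.of_forall fun x => Real.rpow_nonneg (norm_nonneg _) _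
    · exact (hmeas0.norm.pow_const (a:ℝ) |>.aestronglyMeasurable)
  calc ‖∫ x, ∏ i, f i x ∂ν‖ ≤ ∫ x, ‖∏ i, f i x‖ ∂ν := norm_integral_le_integral_norm _
    _ = ∫ x, ∏ i, ‖f i x‖ ∂ν := by simp only [norm_prod]
    _ = (∫⁻ x, ∏ i, F i x ∂ν).toReal := h2
    _ ≤ (A ^ ((n:ℝ)/a)).toReal :=
        ENNReal.toReal_mono (ENNReal.rpow_ne_top_of_nonneg (by positivity) hAtop) key
    _ = A.toReal ^ ((n:ℝ)/a) := (ENNReal.toReal_rpow _ _).symm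
    _ = _ := by rw [h3]
end

section
/- For κ > 0 let f(θ) = e^{2κ cos θ}/(2π I_0(2κ)) be the single-site tilted density on [−π, π]. Then for every integer a ≥ 1, the a-th moment M_a(β, κ) := ∫_{[−π,π]^4} |e^{2β(cos(θ_1+θ_2−θ_3−θ_4) − 1)} − 1|^a Π_{i=1}^4 f(θ_i) dθ_i satisfies: (i) M_a(β,κ) ≤ (1 − e^{−4β})^a for all κ; (ii) for fixed β > 0, M_a(β, κ) → 0 as κ → ∞. -/
open Real MeasureTheory Filter

/-- Modified Bessel function `I₀`. -/
noncomputable def besselI0 (z : ℝ) : ℝ :=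
  (1 / (2 * π)) * ∫ θ in (-π)..π, Real.exp (z * Real.cos θ)

/-- The single-plaquette `a`-th moment `M_a(β,κ)` with four boundary-edge angles drawn
independently from the tilted density `f(θ) = e^{2κ cos θ}/(2π I₀(2κ))` on `[−π,π]`. -/
noncomputable def plaqMoment (a : ℕ) (β κ : ℝ) : ℝ :=
  ∫ θ : Fin 4 → ℝ,
    |Real.exp (2 * β * (Real.cos (θ 0 + θ 1 - θ 2 - θ 3) - 1)) - 1| ^ a *
      ∏ i, Real.exp (2 * κ * Real.cos (θ i)) / (2 * π * besselI0 (2 * κ))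
    ∂(Measure.pi fun _ : Fin 4 => volume.restrict (Set.Icc (-π) π))

noncomputable abbrev mu0 : Measure ℝ := volume.restrict (Set.Icc (-π) π)

section helpers

lemma integrable_mu0 {f : ℝ → ℝ} (hf : Continuous f) : Integrable f mu0 :=
  hf.continuousOn.integrableOn_Icc

lemma mu0_univ : (mu0 Set.univ).toReal = 2 * π := by
  rw [Measure.restrict_apply_univ, Real.volume_Icc,
    ENNReal.toReal_ofReal (by linarith [Real.pi_pos])]
  ring

lemma pi_integral (g : Fin 4 → ℝ → ℝ) :
    ∫ θ : Fin 4 → ℝ, ∏ i, g i (θ i) ∂(Measure.pi fun _ : Fin 4 => mu0)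
      = ∏ i, ∫ x, g i x ∂mu0 :=
  MeasureTheory.integral_fintype_prod_eq_prod (E := fun _ => ℝ) g (μ := fun _ => mu0)

lemma pi_integrable (g : Fin 4 → ℝ → ℝ) (hg : ∀ i, Integrable (g i) mu0) :
    Integrable (fun θ : Fin 4 → ℝ => ∏ i, g i (θ i)) (Measure.pi fun _ : Fin 4 => mu0) :=
  MeasureTheory.Integrable.fintype_prod_dep (E := fun _ => ℝ) (f := g) (μ := fun _ => mu0) hg

lemma besselZ (κ : ℝ) :
    2 * π * besselI0 (2 * κ) = ∫ x, Real.exp (2 * κ * Real.cos x) ∂mu0 := by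
  rw [besselI0, intervalIntegral.integral_of_le (by linarith [Real.pi_pos] : -π ≤ π),
    ← MeasureTheory.integral_Icc_eq_integral_Ioc]
  have : π ≠ 0 := Real.pi_ne_zero
  field_simp

lemma Zpos (κ : ℝ) : 0 < ∫ x, Real.exp (2 * κ * Real.cos x) ∂mu0 := by
  have h : ∀ x : ℝ, Real.exp (-(2 * |κ|)) ≤ Real.exp (2 * κ * Real.cos x) := by
    intro x
    apply Real.exp_le_exp.mpr
    have h1 : |2 * κ * Real.cos x| ≤ 2 * |κ| := by
      rw [abs_mul, abs_mul, abs_two]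
      nlinarith [abs_cos_le_one x, abs_nonneg κ, abs_nonneg (Real.cos x)]
    linarith [neg_abs_le (2 * κ * Real.cos x)]
  calc (0:ℝ) < (2 * π) * Real.exp (-(2 * |κ|)) := by positivity
    _ = ∫ _x, Real.exp (-(2 * |κ|)) ∂mu0 := by
        rw [integral_const, measureReal_def, mu0_univ, smul_eq_mul]
    _ ≤ _ := integral_mono (integrable_const _)
        (integrable_mu0 (by fun_prop)) h

lemma besselZpos (κ : ℝ) : 0 < 2 * π * besselI0 (2 * κ) := by
  rw [besselZ]; exact Zpos κ

lemma F_int (κ : ℝ) :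
    ∫ x, Real.exp (2 * κ * Real.cos x) / (2 * π * besselI0 (2 * κ)) ∂mu0 = 1 := by
  rw [integral_div, besselZ, div_self (Zpos κ).ne']

lemma F_nonneg (κ x : ℝ) :
    0 ≤ Real.exp (2 * κ * Real.cos x) / (2 * π * besselI0 (2 * κ)) :=
  div_nonneg (Real.exp_pos _).le (besselZpos κ).le

lemma Abound {κ : ℝ} (hκ : 0 < κ) :
    ∫ x, (1 - Real.cos x) * Real.exp (2 * κ * Real.cos x) ∂mu0
      ≤ 2 * π * (Real.exp (2 * κ - 1) / (2 * κ)) := by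
  have key : ∀ x : ℝ, (1 - Real.cos x) * Real.exp (2 * κ * Real.cos x)
      ≤ Real.exp (2 * κ - 1) / (2 * κ) := by
    intro x
    set u := 1 - Real.cos x with hu
    have h1 : 2 * κ * u ≤ Real.exp (2 * κ * u - 1) := by
      have := Real.add_one_le_exp (2 * κ * u - 1); linarith
    have h3 : 2 * κ * (u * Real.exp (2 * κ * Real.cos x)) ≤ Real.exp (2 * κ - 1) := by
      calc 2 * κ * (u * Real.exp (2 * κ * Real.cos x))
          = (2 * κ * u) * Real.exp (2 * κ * Real.cos x) := by ring
        _ ≤ Real.exp (2 * κ * u - 1) * Real.exp (2 * κ * Real.cos x) :=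
            mul_le_mul_of_nonneg_right h1 (Real.exp_pos _).le
        _ = Real.exp (2 * κ - 1) := by
            rw [← Real.exp_add]; congr 1; rw [hu]; ring
    rw [le_div_iff₀ (by linarith)]
    linarith
  calc ∫ x, (1 - Real.cos x) * Real.exp (2 * κ * Real.cos x) ∂mu0
      ≤ ∫ _x, Real.exp (2 * κ - 1) / (2 * κ) ∂mu0 :=
        integral_mono (integrable_mu0 (by fun_prop)) (integrable_const _) key
    _ = 2 * π * (Real.exp (2 * κ - 1) / (2 * κ)) := by
        rw [integral_const, measureReal_def, mu0_univ, smul_eq_mul]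

lemma Zlow {κ : ℝ} (hκ : 1 ≤ κ) :
    2 * (Real.sqrt κ)⁻¹ * Real.exp (2 * κ - 1)
      ≤ ∫ x, Real.exp (2 * κ * Real.cos x) ∂mu0 := by
  have hκ0 : (0:ℝ) < κ := by linarith
  set s : ℝ := (Real.sqrt κ)⁻¹ with hs
  have hs0 : 0 < s := by positivity
  have hs1 : s ≤ 1 := by
    rw [hs, inv_le_one_iff₀]
    right; rw [show (1:ℝ) = Real.sqrt 1 by simp]
    exact Real.sqrt_le_sqrt hκ
  have hssq : s ^ 2 = κ⁻¹ := by
    rw [hs, ← Real.sqrt_inv, Real.sq_sqrt (by positivity)]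
  have hsub : Set.Icc (-s) s ⊆ Set.Icc (-π) π :=
    Set.Icc_subset_Icc (by nlinarith [Real.pi_gt_three]) (by nlinarith [Real.pi_gt_three])
  have step1 : ∫ x in Set.Icc (-s) s, Real.exp (2 * κ * Real.cos x)
      ≤ ∫ x, Real.exp (2 * κ * Real.cos x) ∂mu0 :=
    setIntegral_mono_set (integrable_mu0 (by fun_prop))
      (Eventually.of_forall fun x => (Real.exp_pos _).le) hsub.eventuallyLE
  have step2 : 2 * s * Real.exp (2 * κ - 1)
      ≤ ∫ x in Set.Icc (-s) s, Real.exp (2 * κ * Real.cos x) := by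
    have hpt : ∀ x ∈ Set.Icc (-s) s, Real.exp (2 * κ - 1) ≤ Real.exp (2 * κ * Real.cos x) := by
      intro x hx
      apply Real.exp_le_exp.mpr
      have hx2 : x ^ 2 ≤ s ^ 2 := sq_le_sq' hx.1 hx.2
      have := Real.one_sub_sq_div_two_le_cos (x := x)
      have h2 : 1 - κ⁻¹ / 2 ≤ Real.cos x := by rw [← hssq]; linarith
      have : κ * κ⁻¹ = 1 := mul_inv_cancel₀ hκ0.ne'
      nlinarith
    calc 2 * s * Real.exp (2 * κ - 1)
        = ∫ _x in Set.Icc (-s) s, Real.exp (2 * κ - 1) := by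
          rw [setIntegral_const, Real.volume_real_Icc_of_le (by linarith),
            smul_eq_mul]; ring
      _ ≤ _ := setIntegral_mono_on (integrable_const _)
          ((Continuous.continuousOn (by fun_prop)).integrableOn_Icc) measurableSet_Icc hpt
  linarith

/-- The second-moment-type quantity `T κ = ∫ (1 - cos x) f(x) dx`. -/
lemma Tbound {κ : ℝ} (hκ : 1 ≤ κ) :
    ∫ x, (1 - Real.cos x) *
        (Real.exp (2 * κ * Real.cos x) / (2 * π * besselI0 (2 * κ))) ∂mu0
      ≤ π / 2 * (Real.sqrt κ)⁻¹ := by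
  have hκ0 : (0:ℝ) < κ := by linarith
  have hE : (0:ℝ) < Real.exp (2 * κ - 1) := Real.exp_pos _
  have hs0 : (0:ℝ) < (Real.sqrt κ)⁻¹ := by positivity
  have h1 : ∫ x, (1 - Real.cos x) *
        (Real.exp (2 * κ * Real.cos x) / (2 * π * besselI0 (2 * κ))) ∂mu0
      = (∫ x, (1 - Real.cos x) * Real.exp (2 * κ * Real.cos x) ∂mu0)
          / (2 * π * besselI0 (2 * κ)) := by
    rw [← integral_div]
    congr 1 with x
    ring
  rw [h1, besselZ]
  calc (∫ x, (1 - Real.cos x) * Real.exp (2 * κ * Real.cos x) ∂mu0)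
        / (∫ x, Real.exp (2 * κ * Real.cos x) ∂mu0)
      ≤ (2 * π * (Real.exp (2 * κ - 1) / (2 * κ)))
        / (2 * (Real.sqrt κ)⁻¹ * Real.exp (2 * κ - 1)) := by
        apply div_le_div₀ (by positivity) (Abound hκ0) (by positivity) (Zlow hκ)
    _ = π / 2 * (Real.sqrt κ)⁻¹ := by
        have hsq : Real.sqrt κ * Real.sqrt κ = κ := Real.mul_self_sqrt hκ0.le
        have hsκ : Real.sqrt κ ≠ 0 := by positivity
        field_simp
        linear_combination hsq

end helpers

section main

lemma plaq_nonneg (a : ℕ) (β κ : ℝ) : 0 ≤ plaqMoment a β κ :=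
  integral_nonneg fun θ => mul_nonneg (pow_nonneg (abs_nonneg _) _)
    (Finset.prod_nonneg fun i _ => F_nonneg κ _)

lemma part_i (a : ℕ) (β κ : ℝ) (hβ : 0 < β) :
    plaqMoment a β κ ≤ (1 - Real.exp (-(4 * β))) ^ a := by
  set C := 1 - Real.exp (-(4 * β)) with hC
  have hGb : ∀ φ : ℝ, |Real.exp (2 * β * (Real.cos φ - 1)) - 1| ≤ C := by
    intro φ
    have hx1 : 2 * β * (Real.cos φ - 1) ≤ 0 := by nlinarith [Real.cos_le_one φ]
    have hx2 : -(4 * β) ≤ 2 * β * (Real.cos φ - 1) := by nlinarith [Real.neg_one_le_cos φ]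
    have he1 : Real.exp (2 * β * (Real.cos φ - 1)) ≤ 1 := by
      calc Real.exp (2 * β * (Real.cos φ - 1)) ≤ Real.exp 0 := Real.exp_le_exp.mpr hx1
        _ = 1 := Real.exp_zero
    have he2 : Real.exp (-(4 * β)) ≤ Real.exp (2 * β * (Real.cos φ - 1)) :=
      Real.exp_le_exp.mpr hx2
    rw [abs_of_nonpos (by linarith)]
    rw [hC]; linarith
  rw [plaqMoment]
  calc ∫ θ : Fin 4 → ℝ,
        |Real.exp (2 * β * (Real.cos (θ 0 + θ 1 - θ 2 - θ 3) - 1)) - 1| ^ a *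
          ∏ i, Real.exp (2 * κ * Real.cos (θ i)) / (2 * π * besselI0 (2 * κ))
        ∂(Measure.pi fun _ : Fin 4 => mu0)
      ≤ ∫ θ : Fin 4 → ℝ,
          C ^ a * ∏ i, Real.exp (2 * κ * Real.cos (θ i)) / (2 * π * besselI0 (2 * κ))
        ∂(Measure.pi fun _ : Fin 4 => mu0) := by
        apply integral_mono_of_nonneg
        · exact Eventually.of_forall fun θ => mul_nonneg (pow_nonneg (abs_nonneg _) _)
            (Finset.prod_nonneg fun i _ => F_nonneg κ _)
        · exact ((pi_integrable
            (fun _ x => Real.exp (2 * κ * Real.cos x) / (2 * π * besselI0 (2 * κ)))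
            (fun _ => (integrable_mu0 (by fun_prop)).div_const _))).const_mul (C ^ a)
        · exact Eventually.of_forall fun θ =>
            mul_le_mul_of_nonneg_right (pow_le_pow_left₀ (abs_nonneg _) (hGb _) a)
              (Finset.prod_nonneg fun i _ => F_nonneg κ _)
    _ = C ^ a := by
        rw [integral_const_mul,
          pi_integral (fun _ x => Real.exp (2 * κ * Real.cos x) / (2 * π * besselI0 (2 * κ)))]
        simp [F_int κ]

lemma part_ii_bound (a : ℕ) (ha : 1 ≤ a) (β : ℝ) (hβ : 0 < β) {κ : ℝ} (hκ : 1 ≤ κ) :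
    plaqMoment a β κ ≤ 4 * β * π ^ 3 * (Real.sqrt κ)⁻¹ := by
  have hπ := Real.pi_pos
  set F : ℝ → ℝ := fun x => Real.exp (2 * κ * Real.cos x) / (2 * π * besselI0 (2 * κ)) with hF
  set g : Fin 4 → Fin 4 → ℝ → ℝ :=
    fun j i x => (if i = j then (1 - Real.cos x) else 1) * F x with hg
  have hrep : ∀ (j : Fin 4) (θ : Fin 4 → ℝ),
      ∏ i, g j i (θ i) = (1 - Real.cos (θ j)) * ∏ i, F (θ i) := by
    intro j θ
    show ∏ i, ((if i = j then (1 - Real.cos (θ i)) else 1) * F (θ i))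
        = (1 - Real.cos (θ j)) * ∏ i, F (θ i)
    rw [Finset.prod_mul_distrib]
    congr 1
    exact Fintype.prod_ite_eq' j (fun i => 1 - Real.cos (θ i))
  have hgint : ∀ j i, Integrable (g j i) mu0 := by
    intro j i
    apply integrable_mu0
    rw [hg, hF]
    by_cases h : i = j <;> simp [h] <;> fun_prop
  -- a.e. every coordinate lies in [-π, π]
  have hae : ∀ᵐ θ ∂(Measure.pi fun _ : Fin 4 => mu0), ∀ i, θ i ∈ Set.Icc (-π) π := by
    rw [ae_all_iff]
    intro i
    have h0 : mu0 ((Set.Icc (-π) π)ᶜ) = 0 := by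
      rw [Measure.restrict_apply measurableSet_Icc.compl]; simp
    have : (Measure.pi fun _ : Fin 4 => mu0)
        ((fun θ : Fin 4 → ℝ => θ i) ⁻¹' (Set.Icc (-π) π)ᶜ) = 0 :=
      Measure.pi_eval_preimage_null _ h0
    rw [ae_iff]
    exact this
  -- pointwise bound
  have hpt : ∀ θ : Fin 4 → ℝ, (∀ i, θ i ∈ Set.Icc (-π) π) →
      |Real.exp (2 * β * (Real.cos (θ 0 + θ 1 - θ 2 - θ 3) - 1)) - 1| ^ a *
          ∏ i, F (θ i)
        ≤ ∑ j, (2 * β * π ^ 2) * ∏ i, g j i (θ i) := by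
    intro θ hθ
    have hP : (0:ℝ) ≤ ∏ i, F (θ i) := Finset.prod_nonneg fun i _ => F_nonneg κ _
    obtain ⟨φ, hφ⟩ : ∃ φ, φ = θ 0 + θ 1 - θ 2 - θ 3 := ⟨_, rfl⟩
    rw [← hφ]
    have hx1 : 2 * β * (Real.cos φ - 1) ≤ 0 := by nlinarith [Real.cos_le_one φ]
    have he1 : Real.exp (2 * β * (Real.cos φ - 1)) ≤ 1 := by
      calc Real.exp (2 * β * (Real.cos φ - 1)) ≤ Real.exp 0 := Real.exp_le_exp.mpr hx1
        _ = 1 := Real.exp_zero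
    have hb0 : (0:ℝ) ≤ |Real.exp (2 * β * (Real.cos φ - 1)) - 1| := abs_nonneg _
    have hb1 : |Real.exp (2 * β * (Real.cos φ - 1)) - 1| ≤ 1 := by
      rw [abs_of_nonpos (by linarith)]
      have := Real.exp_pos (2 * β * (Real.cos φ - 1)); linarith
    have hpow : |Real.exp (2 * β * (Real.cos φ - 1)) - 1| ^ a
        ≤ |Real.exp (2 * β * (Real.cos φ - 1)) - 1| := by
      calc |Real.exp (2 * β * (Real.cos φ - 1)) - 1| ^ a
          ≤ |Real.exp (2 * β * (Real.cos φ - 1)) - 1| ^ 1 :=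
            pow_le_pow_of_le_one hb0 hb1 ha
        _ = _ := pow_one _
    have hlin : |Real.exp (2 * β * (Real.cos φ - 1)) - 1| ≤ 2 * β * (1 - Real.cos φ) := by
      rw [abs_of_nonpos (by linarith)]
      have := Real.add_one_le_exp (2 * β * (Real.cos φ - 1))
      linarith
    have hquad : ∀ i : Fin 4, (θ i) ^ 2 ≤ π ^ 2 / 2 * (1 - Real.cos (θ i)) := by
      intro i
      have habs : |θ i| ≤ π := abs_le.mpr ⟨(hθ i).1, (hθ i).2⟩
      have h := Real.cos_le_one_sub_mul_cos_sq habs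
      have hπ2 : (0:ℝ) < π ^ 2 := by positivity
      have h' : 2 / π ^ 2 * θ i ^ 2 ≤ 1 - Real.cos (θ i) := by linarith
      have h'' := mul_le_mul_of_nonneg_left h' (by positivity : (0:ℝ) ≤ π ^ 2 / 2)
      have hid : π ^ 2 / 2 * (2 / π ^ 2 * θ i ^ 2) = θ i ^ 2 := by
        field_simp
      linarith
    have hφsq : φ ^ 2 ≤ 4 * ((θ 0) ^ 2 + (θ 1) ^ 2 + (θ 2) ^ 2 + (θ 3) ^ 2) := by
      rw [hφ]
      nlinarith [sq_nonneg (θ 0 - θ 1), sq_nonneg (θ 0 + θ 2), sq_nonneg (θ 0 + θ 3),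
        sq_nonneg (θ 1 + θ 2), sq_nonneg (θ 1 + θ 3), sq_nonneg (θ 2 - θ 3)]
    have hcosφ : 1 - Real.cos φ ≤ φ ^ 2 / 2 := by
      have := Real.one_sub_sq_div_two_le_cos (x := φ); linarith
    have hG : |Real.exp (2 * β * (Real.cos φ - 1)) - 1| ^ a
        ≤ 2 * β * π ^ 2 * ∑ j, (1 - Real.cos (θ j)) := by
      rw [Fin.sum_univ_four]
      have c1 : |Real.exp (2 * β * (Real.cos φ - 1)) - 1| ^ a ≤ 2 * β * (1 - Real.cos φ) :=
        le_trans hpow hlin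
      have c2 : 2 * β * (1 - Real.cos φ) ≤ 2 * β * (φ ^ 2 / 2) :=
        mul_le_mul_of_nonneg_left hcosφ (by positivity)
      have c3 : β * φ ^ 2 ≤ β * (4 * ((θ 0) ^ 2 + (θ 1) ^ 2 + (θ 2) ^ 2 + (θ 3) ^ 2)) :=
        mul_le_mul_of_nonneg_left hφsq hβ.le
      have c4 := fun i => mul_le_mul_of_nonneg_left (hquad i) (by positivity : (0:ℝ) ≤ 4 * β)
      have d0 := c4 0; have d1 := c4 1; have d2 := c4 2; have d3 := c4 3
      exact le_trans c1 (by linarith [d0, d1, d2, d3, c2, c3])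
    calc |Real.exp (2 * β * (Real.cos φ - 1)) - 1| ^ a * ∏ i, F (θ i)
        ≤ (2 * β * π ^ 2 * ∑ j, (1 - Real.cos (θ j))) * ∏ i, F (θ i) :=
          mul_le_mul_of_nonneg_right hG hP
      _ = ∑ j, (2 * β * π ^ 2) * ((1 - Real.cos (θ j)) * ∏ i, F (θ i)) := by
          rw [Finset.mul_sum, Finset.sum_mul]
          exact Finset.sum_congr rfl fun j _ => by ring
      _ = ∑ j, (2 * β * π ^ 2) * ∏ i, g j i (θ i) := by
          congr 1 with j
          rw [hrep j θ]
  -- integral of the dominating function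
  have hTval : ∫ x, (1 - Real.cos x) * F x ∂mu0 ≤ π / 2 * (Real.sqrt κ)⁻¹ := Tbound hκ
  have hgi : ∀ j i : Fin 4, ∫ x, g j i x ∂mu0
      = if i = j then ∫ x, (1 - Real.cos x) * F x ∂mu0 else 1 := by
    intro j i
    by_cases h : i = j
    · simp [hg, h]
    · simp [hg, h, hF, F_int κ]
  have hDint : ∀ j : Fin 4, Integrable
      (fun θ : Fin 4 → ℝ => (2 * β * π ^ 2) * ∏ i, g j i (θ i))
      (Measure.pi fun _ : Fin 4 => mu0) :=
    fun j => (pi_integrable (g j) (hgint j)).const_mul _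
  have hDval : ∫ θ : Fin 4 → ℝ, ∑ j, (2 * β * π ^ 2) * ∏ i, g j i (θ i)
      ∂(Measure.pi fun _ : Fin 4 => mu0)
      = 4 * ((2 * β * π ^ 2) * ∫ x, (1 - Real.cos x) * F x ∂mu0) := by
    rw [integral_finset_sum _ (fun j _ => hDint j)]
    have : ∀ j : Fin 4, ∫ θ : Fin 4 → ℝ, (2 * β * π ^ 2) * ∏ i, g j i (θ i)
        ∂(Measure.pi fun _ : Fin 4 => mu0)
        = (2 * β * π ^ 2) * ∫ x, (1 - Real.cos x) * F x ∂mu0 := by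
      intro j
      rw [integral_const_mul, pi_integral (g j)]
      congr 1
      calc ∏ i, ∫ x, g j i x ∂mu0
          = ∏ i, if i = j then ∫ x, (1 - Real.cos x) * F x ∂mu0 else 1 :=
            Finset.prod_congr rfl fun i _ => hgi j i
        _ = _ := Fintype.prod_ite_eq' j _
    rw [Finset.sum_congr rfl fun j _ => this j]
    simp [Finset.sum_const]
  have hTnn : 0 ≤ ∫ x, (1 - Real.cos x) * F x ∂mu0 :=
    integral_nonneg fun x => mul_nonneg (by nlinarith [Real.cos_le_one x]) (F_nonneg κ x)
  calc plaqMoment a β κ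
      ≤ ∫ θ : Fin 4 → ℝ, ∑ j, (2 * β * π ^ 2) * ∏ i, g j i (θ i)
          ∂(Measure.pi fun _ : Fin 4 => mu0) := by
        rw [plaqMoment]
        apply integral_mono_of_nonneg
        · exact Eventually.of_forall fun θ => mul_nonneg (pow_nonneg (abs_nonneg _) _)
            (Finset.prod_nonneg fun i _ => F_nonneg κ _)
        · exact integrable_finset_sum _ fun j _ => hDint j
        · exact hae.mono fun θ hθ => hpt θ hθ
    _ = 4 * ((2 * β * π ^ 2) * ∫ x, (1 - Real.cos x) * F x ∂mu0) := hDval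
    _ ≤ 4 * ((2 * β * π ^ 2) * (π / 2 * (Real.sqrt κ)⁻¹)) := by
        have h2 : (0:ℝ) ≤ 2 * β * π ^ 2 := by positivity
        nlinarith [mul_le_mul_of_nonneg_left hTval h2]
    _ = 4 * β * π ^ 3 * (Real.sqrt κ)⁻¹ := by ring

/-- (i) `M_a(β,κ) ≤ (1 − e^{−4β})^a` for every `κ > 0`;
(ii) for fixed `β > 0`, `M_a(β,κ) → 0` as `κ → ∞`. -/
theorem stmt18 (a : ℕ) (ha : 1 ≤ a) (β : ℝ) (hβ : 0 < β) :
    (∀ κ : ℝ, 0 < κ → plaqMoment a β κ ≤ (1 - Real.exp (-(4 * β))) ^ a)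
    ∧ Tendsto (fun κ : ℝ => plaqMoment a β κ) atTop (nhds 0) := by
  constructor
  · exact fun κ _ => part_i a β κ hβ
  · have hsqrt : Tendsto Real.sqrt atTop atTop := by
      rw [tendsto_atTop_atTop]
      intro b
      refine ⟨(max b 0) ^ 2, fun x hx => ?_⟩
      have h1 : Real.sqrt ((max b 0) ^ 2) ≤ Real.sqrt x := Real.sqrt_le_sqrt hx
      rw [Real.sqrt_sq (le_max_right b 0)] at h1
      exact le_trans (le_max_left b 0) h1
    have hbound : Tendsto (fun κ : ℝ => 4 * β * π ^ 3 * (Real.sqrt κ)⁻¹) atTop (nhds 0) := by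
      have h := hsqrt.inv_tendsto_atTop
      have := h.const_mul (4 * β * π ^ 3)
      simpa using this
    apply tendsto_of_tendsto_of_tendsto_of_le_of_le' tendsto_const_nhds hbound
    · exact Eventually.of_forall fun κ => plaq_nonneg a β κ
    · exact (eventually_ge_atTop (1:ℝ)).mono fun κ hκ => part_ii_bound a ha β hβ hκ

end main
end

section
/- Let k ≥ 1 and let γ be a rectangular loop in the plane spanned by two coordinate directions of ℤ^m, and let j ≥ 1 with k ∤ j. If n is a current in the class C_{jγ,k} (i.e., (n[∂̂e] − n[−∂̂e]) + k(n[e] − n[−e]) + jγ[e] = 0 for all edges e), then the restriction of supp n to plaquettes contains at least area(γ) plaquettes, where area(γ) is the number of plaquettes in the minimal spanning surface of γ. -/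
open scoped Classical

/-- A positively oriented edge of `ℤ^m`: a base point and a direction. -/
abbrev ZEdge (m : ℕ) := (Fin m → ℤ) × Fin m

/-- A positively oriented plaquette of `ℤ^m`: a base point and an ordered pair of
directions. -/
abbrev ZPlaq (m : ℕ) := (Fin m → ℤ) × Fin m × Fin m

/-- The unit vector in direction `i`. -/
def zunit {m : ℕ} (i : Fin m) : Fin m → ℤ := fun l => if l = i then 1 else 0

/-- The coefficient of the positive edge `e` in the boundary of the plaquette
`p = (x, i, j)`, whose boundary is `+(x,i) +(x+eᵢ,j) −(x+eⱼ,i) −(x,j)`. -/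
noncomputable def bdCoef {m : ℕ} (p : ZPlaq m) (e : ZEdge m) : ℤ :=
  (if e = (p.1, p.2.1) then 1 else 0)
  + (if e = (fun l => p.1 l + zunit p.2.1 l, p.2.2) then 1 else 0)
  - (if e = (fun l => p.1 l + zunit p.2.2 l, p.2.1) then 1 else 0)
  - (if e = (p.1, p.2.2) then 1 else 0)

/-- The rectangular loop with side lengths `R` (in direction `d0`) and `T` (in direction
`d1`), based at the origin of the coordinate plane spanned by `d0, d1`. -/
noncomputable def rectLoop {m : ℕ} (d0 d1 : Fin m) (R T : ℕ) (e : ZEdge m) : ℤ :=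
  if (∀ l : Fin m, l ≠ d0 → l ≠ d1 → e.1 l = 0) then
    (if e.2 = d0 ∧ e.1 d1 = 0 ∧ 0 ≤ e.1 d0 ∧ e.1 d0 < R then 1
     else if e.2 = d1 ∧ e.1 d0 = R ∧ 0 ≤ e.1 d1 ∧ e.1 d1 < T then 1
     else if e.2 = d0 ∧ e.1 d1 = T ∧ 0 ≤ e.1 d0 ∧ e.1 d0 < R then -1
     else if e.2 = d1 ∧ e.1 d0 = 0 ∧ 0 ≤ e.1 d1 ∧ e.1 d1 < T then -1
     else 0)
  else 0

/-!
Fix a unit square at `(a, b)` inside `γ` and let `H` be the set of `d0`-edges crossing the ray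
that leaves the square upwards in direction `d1`. Pair the constraint with the indicator of `H`.
The boundary of a plaquette crosses `H` with net multiplicity zero unless the plaquette is based
at `(a, b)`, the loop `γ` crosses `H` exactly once, and the edge terms contribute a multiple of
`k`. So if no plaquette based at `(a, b)` carried flux, `k` would divide `j`. Distinct squares
give distinct plaquettes of the support, hence at least `R * T` of them.
-/

namespace ZPlaq

variable {m : ℕ}

def boundary (p : ZPlaq m) : Finset (ZEdge m) :=
  {(p.1, p.2.1), (fun l => p.1 l + zunit p.2.1 l, p.2.2),
    (fun l => p.1 l + zunit p.2.2 l, p.2.1), (p.1, p.2.2)}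

/-- The pairing `⟨∂p, 1_H⟩` of the boundary of `p` with the indicator of the edge set `H`. -/
noncomputable def cutFlux (H : Set (ZEdge m)) (p : ZPlaq m) : ℤ :=
  (if (p.1, p.2.1) ∈ H then 1 else 0)
  + (if ((fun l => p.1 l + zunit p.2.1 l, p.2.2) : ZEdge m) ∈ H then 1 else 0)
  - (if ((fun l => p.1 l + zunit p.2.2 l, p.2.1) : ZEdge m) ∈ H then 1 else 0)
  - (if (p.1, p.2.2) ∈ H then 1 else 0)

theorem sum_bdCoef_eq_cutFlux {H : Set (ZEdge m)} {E : Finset (ZEdge m)} {p : ZPlaq m}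
    (hE : ∀ c ∈ p.boundary, c ∈ E ↔ c ∈ H) : ∑ e ∈ E, bdCoef p e = p.cutFlux H := by
  simp only [boundary, Finset.mem_insert, Finset.mem_singleton, forall_eq_or_imp,
    forall_eq] at hE
  obtain ⟨h₁, h₂, h₃, h₄⟩ := hE
  simp only [bdCoef, cutFlux, Finset.sum_sub_distrib, Finset.sum_add_distrib,
    Finset.sum_ite_eq', h₁, h₂, h₃, h₄]

end ZPlaq

def halfCut {m : ℕ} (d0 d1 : Fin m) (a b : ℤ) : Set (ZEdge m) :=
  {e | e.2 = d0 ∧ e.1 d0 = a ∧ b < e.1 d1}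

theorem mem_halfCut {m : ℕ} {d0 d1 : Fin m} {a b : ℤ} {e : ZEdge m} :
    e ∈ halfCut d0 d1 a b ↔ e.2 = d0 ∧ e.1 d0 = a ∧ b < e.1 d1 :=
  Iff.rfl

theorem cutFlux_halfCut_eq_zero {m : ℕ} {d0 d1 : Fin m} {a b : ℤ} {p : ZPlaq m}
    (hp : ¬ (p.1 d0 = a ∧ p.1 d1 = b)) : p.cutFlux (halfCut d0 d1 a b) = 0 := by
  obtain ⟨x, i, i'⟩ := p
  simp only [ZPlaq.cutFlux, mem_halfCut, zunit] at hp ⊢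
  split_ifs <;> grind

def topEdge {m : ℕ} (d0 d1 : Fin m) (a : ℤ) (T : ℕ) : ZEdge m :=
  (fun l => if l = d0 then a else if l = d1 then (T : ℤ) else 0, d0)

theorem topEdge_mem_halfCut {m : ℕ} {d0 d1 : Fin m} (hd : d0 ≠ d1) {a b : ℤ} {T : ℕ}
    (hbT : b < T) : topEdge d0 d1 a T ∈ halfCut d0 d1 a b := by
  simp [topEdge, halfCut, hd.symm, hbT]

theorem rectLoop_of_mem_halfCut {m : ℕ} {d0 d1 : Fin m} (hd : d0 ≠ d1) {R T : ℕ} {a b : ℤ}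
    (ha : 0 ≤ a) (haR : a < R) (hb : 0 ≤ b) {e : ZEdge m} (he : e ∈ halfCut d0 d1 a b) :
    rectLoop d0 d1 R T e = if e = topEdge d0 d1 a T then -1 else 0 := by
  obtain ⟨x, i⟩ := e
  obtain ⟨rfl, rfl, hbx⟩ := he
  simp only [rectLoop, topEdge, Prod.mk.injEq, and_true, funext_iff]
  split_ifs <;> grind

theorem exists_flux_ne_zero_at {m : ℕ} {d0 d1 : Fin m} (hd : d0 ≠ d1) {R T : ℕ} {k j : ℤ}
    (hndvd : ¬ k ∣ j) {F : ZPlaq m → ℤ} (hF : (Function.support F).Finite) (g : ZEdge m → ℤ)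
    (hcurrent : ∀ e : ZEdge m,
      (∑ᶠ p, bdCoef p e * F p) + k * g e + j * rectLoop d0 d1 R T e = 0)
    {a b : ℤ} (ha : 0 ≤ a) (haR : a < R) (hb : 0 ≤ b) (hbT : b < T) :
    ∃ p : ZPlaq m, F p ≠ 0 ∧ p.1 d0 = a ∧ p.1 d1 = b := by
  set S := hF.toFinset
  set H := halfCut d0 d1 a b
  -- `g` need not be finitely supported, so the constraint is summed over a finite part of `H`
  -- containing the boundary edges of the support and the loop's one edge in `H`.
  set E := insert (topEdge d0 d1 a T) ((S.biUnion ZPlaq.boundary).filter (· ∈ H))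
  have hEH : ∀ e ∈ E, e ∈ H := by
    simp only [E, Finset.forall_mem_insert, Finset.mem_filter]
    exact ⟨topEdge_mem_halfCut hd hbT, fun _ he => he.2⟩
  have hflux : ∀ p ∈ S, ∑ e ∈ E, bdCoef p e = p.cutFlux H := fun p hp =>
    ZPlaq.sum_bdCoef_eq_cutFlux fun c hc =>
      ⟨hEH c, fun hcH => Finset.mem_insert_of_mem
        (Finset.mem_filter.2 ⟨Finset.mem_biUnion.2 ⟨p, hp, hc⟩, hcH⟩)⟩
  have hloop : ∑ e ∈ E, rectLoop d0 d1 R T e = -1 := by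
    rw [Finset.sum_congr rfl fun e he => rectLoop_of_mem_halfCut hd ha haR hb (hEH e he),
      Finset.sum_ite_eq', if_pos (Finset.mem_insert_self _ _)]
  have hbalance : ∑ p ∈ S, p.cutFlux H * F p + k * ∑ e ∈ E, g e - j = 0 := by
    have hfinsum : ∀ e, ∑ᶠ p, bdCoef p e * F p = ∑ p ∈ S, bdCoef p e * F p := fun e =>
      finsum_eq_sum_of_support_subset _ fun p hp => by
        simpa [S] using Function.support_mul_subset_right _ _ hp
    have hsum := Finset.sum_eq_zero (s := E) fun e _ => hcurrent e
    simp only [hfinsum, Finset.sum_add_distrib, ← Finset.mul_sum, hloop] at hsum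
    rw [Finset.sum_comm, Finset.sum_congr rfl fun p hp => by
      rw [← Finset.sum_mul, hflux p hp]] at hsum
    linarith
  by_contra hno
  have hzero : ∑ p ∈ S, p.cutFlux H * F p = 0 := Finset.sum_eq_zero fun p hp => by
    have hFp : F p ≠ 0 := by simpa [S] using hp
    rw [cutFlux_halfCut_eq_zero fun hab => hno ⟨p, hFp, hab⟩, zero_mul]
  exact hndvd ⟨∑ e ∈ E, g e, by linarith⟩

theorem stmt19_general (m : ℕ) (d0 d1 : Fin m) (hd : d0 ≠ d1)
    (R T : ℕ)
    (k j : ℤ) (hndvd : ¬ k ∣ j)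
    (nE : ZEdge m × Bool → ℕ) (nP : ZPlaq m × Bool → ℕ)
    (hfin : {p : ZPlaq m | nP (p, true) ≠ 0 ∨ nP (p, false) ≠ 0}.Finite)
    (hcurrent : ∀ e : ZEdge m,
      (∑ᶠ p : ZPlaq m, bdCoef p e * ((nP (p, true) : ℤ) - (nP (p, false) : ℤ)))
        + k * ((nE (e, true) : ℤ) - (nE (e, false) : ℤ))
        + j * rectLoop d0 d1 R T e = 0) :
    R * T ≤ hfin.toFinset.card := by
  set F : ZPlaq m → ℤ := fun p => (nP (p, true) : ℤ) - (nP (p, false) : ℤ)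
  have hsupp : Function.support F ⊆ {p | nP (p, true) ≠ 0 ∨ nP (p, false) ≠ 0} :=
    fun p hp => by
      contrapose! hp
      simp_all [F]
  have hcover : Finset.Ico (0 : ℤ) R ×ˢ Finset.Ico (0 : ℤ) T ⊆
      hfin.toFinset.image fun p => (p.1 d0, p.1 d1) := by
    rintro ⟨a, b⟩ hab
    simp only [Finset.mem_product, Finset.mem_Ico] at hab
    obtain ⟨p, hp, rfl, rfl⟩ := exists_flux_ne_zero_at hd hndvd (hfin.subset hsupp) _
      hcurrent hab.1.1 hab.1.2 hab.2.1 hab.2.2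
    exact Finset.mem_image_of_mem _ (hfin.mem_toFinset.2 (hsupp hp))
  calc R * T = (Finset.Ico (0 : ℤ) R ×ˢ Finset.Ico (0 : ℤ) T).card := by simp
    _ ≤ _ := (Finset.card_le_card hcover).trans Finset.card_image_le

/-- let `γ` be the `Rn × Tn`-style rectangular loop (side lengths `R`, `T`)
in the plane spanned by two coordinate directions of `ℤ^m`, let `k ≥ 1`, `j ≥ 1` with
`k ∤ j`, and let `n` be an `ℕ`-valued current on oriented cells (`Bool` records the
orientation) with finitely many nonzero plaquette values, satisfying the constraint of the
class `C_{jγ,k}`: for every positive edge `e`,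
`Σ_p ∂p[e]·(n[p]−n[−p]) + k(n[e]−n[−e]) + jγ[e] = 0`.
Then the plaquette part of `supp n` contains at least `area(γ) = R·T` plaquettes. -/
theorem stmt19 (m : ℕ) (hm : 2 ≤ m) (d0 d1 : Fin m) (hd : d0 ≠ d1)
    (R T : ℕ) (hR : 1 ≤ R) (hT : 1 ≤ T)
    (k j : ℤ) (hk : 1 ≤ k) (hj : 1 ≤ j) (hndvd : ¬ k ∣ j)
    (nE : ZEdge m × Bool → ℕ) (nP : ZPlaq m × Bool → ℕ)
    (hfin : {p : ZPlaq m | nP (p, true) ≠ 0 ∨ nP (p, false) ≠ 0}.Finite)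
    (hcurrent : ∀ e : ZEdge m,
      (∑ᶠ p : ZPlaq m, bdCoef p e * ((nP (p, true) : ℤ) - (nP (p, false) : ℤ)))
        + k * ((nE (e, true) : ℤ) - (nE (e, false) : ℤ))
        + j * rectLoop d0 d1 R T e = 0) :
    R * T ≤ hfin.toFinset.card :=
  stmt19_general m d0 d1 hd R T k j hndvd nE nP hfin hcurrent
end
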